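/- In the All-but-k game with k jars (k ≥ 2), the position (n, n, ..., n) in which all k jars contain the same number n of cookies is a P-position, for every natural number n. -/

import Mathlib

/-- A move in a CM-Nim game with permissible family `𝒮`: choose a permissible
(nonempty) set `S` of jars and a positive number `c` of cookies with `c ≤ p i`
for every `i ∈ S`, and take `c` cookies from each jar in `S`. -/
def CMMove {k : ℕ} (𝒮 : Set (Finset (Fin k))) (p q : Fin k → ℕ) : Prop :=
  ∃ S ∈ 𝒮, S.Nonempty ∧ ∃ c > 0, (∀ i ∈ S, c ≤ p i ∧ q i = p i - c) ∧ ∀ i ∉ S, q i = p i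

lemma CMMove.sum_lt {k : ℕ} {𝒮 : Set (Finset (Fin k))} {p q : Fin k → ℕ}
    (h : CMMove 𝒮 p q) : ∑ i, q i < ∑ i, p i := by
  obtain ⟨S, hS, ⟨i0, hi0⟩, c, hc, h1, h2⟩ := h
  apply Finset.sum_lt_sum
  · intro i _
    by_cases hi : i ∈ S
    · have := h1 i hi; omega
    · rw [h2 i hi]
  · exact ⟨i0, Finset.mem_univ _, by have := h1 i0 hi0; omega⟩

/-- P-positions of a CM-Nim game, defined by well-founded recursion on the
total number of cookies: a position is a P-position iff every move from it
leads to a position that is not a P-position. -/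
def CMPPos {k : ℕ} (𝒮 : Set (Finset (Fin k))) (p : Fin k → ℕ) : Prop :=
  ∀ q, CMMove 𝒮 p q → ¬ CMPPos 𝒮 q
termination_by ∑ i, p i
decreasing_by exact CMMove.sum_lt (by assumption)

/-- Nim with `k` piles: only singletons are permissible. -/
def NimSets (k : ℕ) : Set (Finset (Fin k)) := {S | ∃ i, S = {i}}

/-- The All-but-`k` game with `k` jars: the permissible sets are all nonempty
proper subsets of the set of jars. -/
def AllButSets (k : ℕ) : Set (Finset (Fin k)) :=
  {S | S.Nonempty ∧ S ≠ Finset.univ}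

/-!
Whenever the first player takes `c` cookies from each jar of a nonempty proper set `S`, the
second player takes `c` cookies from each jar of the complement `Sᶜ`, which is again a nonempty
proper set. This restores a position with all jars equal, so the second player can always answer
and never runs out of moves first.
-/

section CMNim

variable {k : ℕ} {𝒮 : Set (Finset (Fin k))}

theorem cmPPos_iff {p : Fin k → ℕ} : CMPPos 𝒮 p ↔ ∀ q, CMMove 𝒮 p q → ¬ CMPPos 𝒮 q := by
  rw [CMPPos]

theorem cmPPos_of_forall_move_exists_move (A : Set (Fin k → ℕ))
    (hA : ∀ p ∈ A, ∀ q, CMMove 𝒮 p q → ∃ r ∈ A, CMMove 𝒮 q r) :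
    ∀ p ∈ A, CMPPos 𝒮 p := by
  suffices h : ∀ N, ∀ p ∈ A, ∑ i, p i = N → CMPPos 𝒮 p from fun p hp => h _ p hp rfl
  intro N
  induction N using Nat.strong_induction_on with
  | _ N ih =>
    rintro p hp rfl
    rw [cmPPos_iff]
    intro q hpq hq
    obtain ⟨r, hr, hqr⟩ := hA p hp q hpq
    have hr_pos : CMPPos 𝒮 r := ih _ ((hqr.sum_lt).trans hpq.sum_lt) r hr rfl
    exact cmPPos_iff.mp hq r hqr hr_pos

end CMNim

theorem AllButSets.compl_mem {k : ℕ} {S : Finset (Fin k)} (hS : S ∈ AllButSets k) :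
    Sᶜ ∈ AllButSets k := by
  obtain ⟨hne, hne_univ⟩ := hS
  refine ⟨(Finset.compl_ne_univ_iff_nonempty Sᶜ).mp ?_,
    (Finset.compl_ne_univ_iff_nonempty S).mpr hne⟩
  rwa [compl_compl]

theorem AllButSets.exists_move_const_of_move_const {k n : ℕ} {q : Fin k → ℕ}
    (h : CMMove (AllButSets k) (fun _ => n) q) : ∃ m, CMMove (AllButSets k) q (fun _ => m) := by
  obtain ⟨S, hS, ⟨i₀, hi₀⟩, c, hc, h_in, h_out⟩ := h
  have hcn : c ≤ n := (h_in i₀ hi₀).1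
  have hSc := AllButSets.compl_mem hS
  refine ⟨n - c, Sᶜ, hSc, hSc.1, c, hc, fun i hi => ?_, fun i hi => ?_⟩
  · rw [h_out i (Finset.mem_compl.mp hi)]
    exact ⟨hcn, rfl⟩
  · rw [Finset.mem_compl, not_not] at hi
    exact (h_in i hi).2.symm

theorem allBut_const_ppos_general (k : ℕ) (n : ℕ) :
    CMPPos (AllButSets k) (fun _ => n) := by
  refine cmPPos_of_forall_move_exists_move (Set.range fun m (_ : Fin k) => m) ?_ _ ⟨n, rfl⟩
  rintro _ ⟨m, rfl⟩ q hq
  obtain ⟨m', hm'⟩ := AllButSets.exists_move_const_of_move_const hq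
  exact ⟨_, ⟨m', rfl⟩, hm'⟩

/-- In the All-but-`k` game with `k ≥ 2` jars, the position in which all jars
contain the same number `n` of cookies is a P-position, for every `n`. -/
theorem allBut_const_ppos (k : ℕ) (hk : 2 ≤ k) (n : ℕ) :
    CMPPos (AllButSets k) (fun _ => n) :=
  allBut_const_ppos_general k n
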